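/- Let A = Ṡ S† with S = UΣVᵀ a reduced SVD of rank r, and à = Uᵀ Ṡ V Σ⁻¹. If w is an eigenvector of à with eigenvalue λ ≠ 0, then θ = Ṡ V Σ⁻¹ w (the exact DMD mode) is an eigenvector of A with the same eigenvalue λ, i.e. A θ = λ θ (provided θ ≠ 0). -/

import Mathlib

open Matrix

theorem Matrix.mul_mulVec_eq_smul_of_mul_mulVec_eq_smul {ι κ R : Type*} [Fintype ι] [Fintype κ]
    [CommSemiring R] {B : Matrix ι κ R} {C : Matrix κ ι R} {w : κ → R} {c : R}
    (h : (C * B) *ᵥ w = c • w) : (B * C) *ᵥ (B *ᵥ w) = c • (B *ᵥ w) := by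
  rw [mulVec_mulVec, Matrix.mul_assoc, ← mulVec_mulVec, h, mulVec_smul]

theorem exact_dmd_mode_is_eigenvector_general
    {n m r : ℕ}
    (Sdot : Matrix (Fin n) (Fin m) ℝ)
    (U : Matrix (Fin n) (Fin r) ℝ) (Sig : Matrix (Fin r) (Fin r) ℝ)
    (V : Matrix (Fin m) (Fin r) ℝ)
    (A : Matrix (Fin n) (Fin n) ℝ) (hA : A = Sdot * (V * Sig⁻¹ * U.transpose))
    (lam : ℝ) (w : Fin r → ℝ)
    (hw : (U.transpose * Sdot * V * Sig⁻¹).mulVec w = lam • w)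
    (θ : Fin n → ℝ) (hθ : θ = (Sdot * V * Sig⁻¹).mulVec w) :
    A.mulVec θ = lam • θ := by
  have hA' : A = (Sdot * V * Sig⁻¹) * U.transpose := by simp only [hA, Matrix.mul_assoc]
  have hw' : (U.transpose * (Sdot * V * Sig⁻¹)) *ᵥ w = lam • w := by
    simpa only [Matrix.mul_assoc] using hw
  rw [hA', hθ]
  exact mul_mulVec_eq_smul_of_mul_mulVec_eq_smul hw'

/-- If `w` is an eigenvector of the reduced DMD operator `Ã = Uᵀ Ṡ V Σ⁻¹` with eigenvalue
`λ ≠ 0`, then the exact DMD mode `θ = Ṡ V Σ⁻¹ w` (assumed nonzero) is an eigenvector of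
`A = Ṡ S†` with the same eigenvalue. -/
theorem exact_dmd_mode_is_eigenvector
    {n m r : ℕ}
    (S Sdot : Matrix (Fin n) (Fin m) ℝ)
    (U : Matrix (Fin n) (Fin r) ℝ) (Sig : Matrix (Fin r) (Fin r) ℝ)
    (V : Matrix (Fin m) (Fin r) ℝ)
    (hU : U.transpose * U = 1) (hV : V.transpose * V = 1)
    (hSigdiag : ∀ i j, i ≠ j → Sig i j = 0) (hSiginv : IsUnit Sig.det)
    (hS : S = U * Sig * V.transpose)
    (A : Matrix (Fin n) (Fin n) ℝ) (hA : A = Sdot * (V * Sig⁻¹ * U.transpose))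
    (lam : ℝ) (hlam : lam ≠ 0) (w : Fin r → ℝ)
    (hw : (U.transpose * Sdot * V * Sig⁻¹).mulVec w = lam • w)
    (θ : Fin n → ℝ) (hθ : θ = (Sdot * V * Sig⁻¹).mulVec w) (hθne : θ ≠ 0) :
    A.mulVec θ = lam • θ :=
  exact_dmd_mode_is_eigenvector_general Sdot U Sig V A hA lam w hw θ hθ
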